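/- arXiv:2007.10939 — 7 statements merged into one kernel-verified Lean document; each statement's English description precedes it below -/
import Mathlib

section
/- Let (A,·,1) be a unital associative algebra, r ∈ A⊗A, and define r♯: A* → A by ⟨r♯(a*), b*⟩ = ⟨r, a*⊗b*⟩ and r^{t♯}: A* → A by ⟨r^{t♯}(a*), b*⟩ = ⟨r, b*⊗a*⟩. Then r satisfies the μ-nonhomogeneous associative Yang-Baxter equation r₁₂r₁₃ + r₁₃r₂₃ − r₂₃r₁₂ = μ r₁₃ if and only if for all a*, b* ∈ A*: r♯(a*)·r♯(b*) + r♯(a* L*(r^{t♯}(b*))) − r♯(R*(r♯(a*)) b*) − μ⟨1, b*⟩ r♯(a*) = 0. -/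
open TensorProduct

noncomputable def t12 (k A : Type*) [Field k] [Ring A] [Algebra k A]
    (r : A ⊗[k] A) : A ⊗[k] (A ⊗[k] A) :=
  LinearMap.lTensor A ((TensorProduct.mk k A A).flip 1) r

noncomputable def t13 (k A : Type*) [Field k] [Ring A] [Algebra k A]
    (r : A ⊗[k] A) : A ⊗[k] (A ⊗[k] A) :=
  LinearMap.lTensor A (TensorProduct.mk k A A 1) r

noncomputable def t23 (k A : Type*) [Field k] [Ring A] [Algebra k A]
    (r : A ⊗[k] A) : A ⊗[k] (A ⊗[k] A) :=
  (1 : A) ⊗ₜ[k] r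

/-- The μ-nonhomogeneous associative Yang-Baxter equation
`r₁₂r₁₃ + r₁₃r₂₃ − r₂₃r₁₂ = μ r₁₃` in `A ⊗ A ⊗ A`. -/
noncomputable def nhacYBE (k A : Type*) [Field k] [Ring A] [Algebra k A]
    (μ : k) (r : A ⊗[k] A) : Prop :=
  t12 k A r * t13 k A r + t13 k A r * t23 k A r - t23 k A r * t12 k A r
    = μ • t13 k A r

/-- A tensor `s ∈ A ⊗ A` is invariant if `(id ⊗ L(x) − R(x) ⊗ id) s = 0` for all `x`. -/
def tinv (k A : Type*) [Field k] [Ring A] [Algebra k A]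
    (s : A ⊗[k] A) : Prop :=
  ∀ x : A,
    LinearMap.lTensor A (LinearMap.mulLeft k x) s
      - LinearMap.rTensor A (LinearMap.mulRight k x) s = 0

/-- `r♯ : A* → A`, `⟨r♯(a*), b*⟩ = ⟨r, a* ⊗ b*⟩`. -/
noncomputable def rsharp (k A : Type*) [Field k] [Ring A] [Algebra k A]
    (r : A ⊗[k] A) (f : Module.Dual k A) : A :=
  TensorProduct.lid k A (LinearMap.rTensor A f r)

/-- `r^{t♯} : A* → A`, `⟨r^{t♯}(a*), b*⟩ = ⟨r, b* ⊗ a*⟩`. -/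
noncomputable def rtsharp (k A : Type*) [Field k] [Ring A] [Algebra k A]
    (r : A ⊗[k] A) (f : Module.Dual k A) : A :=
  TensorProduct.rid k A (LinearMap.lTensor A f r)

/-- `L*(x) : A* → A*`, `⟨a* L*(x), b⟩ = ⟨a*, x b⟩`. -/
noncomputable def Lstar (k A : Type*) [Field k] [Ring A] [Algebra k A]
    (x : A) : Module.Dual k A →ₗ[k] Module.Dual k A :=
  (LinearMap.mulLeft k x).dualMap

/-- `R*(x) : A* → A*`, `⟨R*(x) a*, b⟩ = ⟨a*, b x⟩`. -/
noncomputable def Rstar (k A : Type*) [Field k] [Ring A] [Algebra k A]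
    (x : A) : Module.Dual k A →ₗ[k] Module.Dual k A :=
  (LinearMap.mulRight k x).dualMap

/-!
Pairing the first two legs of `A ⊗ A ⊗ A` with `a* ⊗ b*`, i.e. applying `a* ⊗ b* ⊗ id`, turns
`r₁₂r₁₃`, `r₁₃r₂₃`, `r₂₃r₁₂` and `r₁₃` into `r♯(a* L*(r^{t♯}(b*)))`, `r♯(a*) r♯(b*)`,
`r♯(R*(r♯(a*)) b*)` and `⟨1, b*⟩ r♯(a*)`. Since `A` has a basis, these maps jointly separate the
points of `A ⊗ A ⊗ A`, so the Yang-Baxter identity holds iff all its pairings vanish.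
-/

theorem TensorProduct.eq_zero_of_forall_lid_rTensor_eq_zero {R V M : Type*} [CommRing R]
    [AddCommGroup V] [Module R V] [Module.Free R V] [AddCommGroup M] [Module R M]
    {x : V ⊗[R] M} (h : ∀ f : Module.Dual R V, TensorProduct.lid R M (f.rTensor M x) = 0) :
    x = 0 := by
  classical
  apply (equivFinsuppOfBasisLeft (Module.Free.chooseBasis R V)).injective
  ext i
  simp [equivFinsuppOfBasisLeft_apply, h]

namespace NonhomogeneousAYBE

variable {k A : Type*} [Field k] [Ring A] [Algebra k A]

noncomputable def contract₁₂ (f g : Module.Dual k A) : A ⊗[k] (A ⊗[k] A) →ₗ[k] A :=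
  (TensorProduct.lid k A).toLinearMap ∘ₗ g.rTensor A
    ∘ₗ (TensorProduct.lid k (A ⊗[k] A)).toLinearMap ∘ₗ f.rTensor (A ⊗[k] A)

@[simp]
lemma contract₁₂_tmul_tmul (f g : Module.Dual k A) (x y z : A) :
    contract₁₂ f g (x ⊗ₜ[k] (y ⊗ₜ[k] z)) = (f x * g y) • z := by
  simp [contract₁₂, mul_smul]

lemma eq_zero_of_forall_contract₁₂_eq_zero {T : A ⊗[k] (A ⊗[k] A)}
    (h : ∀ f g : Module.Dual k A, contract₁₂ f g T = 0) : T = 0 :=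
  TensorProduct.eq_zero_of_forall_lid_rTensor_eq_zero fun f ↦
    TensorProduct.eq_zero_of_forall_lid_rTensor_eq_zero (h f)

@[simp]
lemma rsharp_tmul (a b : A) (f : Module.Dual k A) : rsharp k A (a ⊗ₜ[k] b) f = f a • b := by
  simp [rsharp]

@[simp]
lemma rtsharp_tmul (a b : A) (f : Module.Dual k A) : rtsharp k A (a ⊗ₜ[k] b) f = f b • a := by
  simp [rtsharp]

@[simp]
lemma rsharp_add (r s : A ⊗[k] A) (f : Module.Dual k A) :
    rsharp k A (r + s) f = rsharp k A r f + rsharp k A s f := by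
  simp [rsharp]

@[simp]
lemma rtsharp_add (r s : A ⊗[k] A) (f : Module.Dual k A) :
    rtsharp k A (r + s) f = rtsharp k A r f + rtsharp k A s f := by
  simp [rtsharp]

@[simp]
lemma rsharp_zero (f : Module.Dual k A) : rsharp k A 0 f = 0 := by simp [rsharp]

@[simp]
lemma rtsharp_zero (f : Module.Dual k A) : rtsharp k A 0 f = 0 := by simp [rtsharp]

@[simp]
lemma rsharp_dual_add (r : A ⊗[k] A) (f g : Module.Dual k A) :
    rsharp k A r (f + g) = rsharp k A r f + rsharp k A r g := by
  simp [rsharp, LinearMap.rTensor_add]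

@[simp]
lemma rsharp_dual_zero (r : A ⊗[k] A) : rsharp k A r 0 = 0 := by
  simp [rsharp]

@[simp]
lemma Lstar_apply (x : A) (f : Module.Dual k A) (c : A) : Lstar k A x f c = f (x * c) := rfl

@[simp]
lemma Rstar_apply (x : A) (f : Module.Dual k A) (c : A) : Rstar k A x f c = f (c * x) := rfl

@[simp]
lemma Lstar_add (x y : A) : Lstar k A (x + y) = Lstar k A x + Lstar k A y := by
  ext f c; simp [add_mul]

@[simp]
lemma Lstar_zero : Lstar k A 0 = 0 := by ext f c; simp

@[simp]
lemma Rstar_add (x y : A) : Rstar k A (x + y) = Rstar k A x + Rstar k A y := by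
  ext f c; simp [mul_add]

@[simp]
lemma t12_tmul (a b : A) : t12 k A (a ⊗ₜ[k] b) = a ⊗ₜ[k] (b ⊗ₜ[k] 1) := rfl

@[simp]
lemma t13_tmul (a b : A) : t13 k A (a ⊗ₜ[k] b) = a ⊗ₜ[k] ((1 : A) ⊗ₜ[k] b) := rfl

@[simp]
lemma t12_add (r s : A ⊗[k] A) : t12 k A (r + s) = t12 k A r + t12 k A s := map_add _ _ _

@[simp]
lemma t13_add (r s : A ⊗[k] A) : t13 k A (r + s) = t13 k A r + t13 k A s := map_add _ _ _

@[simp]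
lemma t23_add (r s : A ⊗[k] A) : t23 k A (r + s) = t23 k A r + t23 k A s := tmul_add _ _ _

@[simp]
lemma t12_zero : t12 k A 0 = 0 := map_zero _

@[simp]
lemma t13_zero : t13 k A 0 = 0 := map_zero _

@[simp]
lemma t23_zero : t23 k A 0 = 0 := tmul_zero _ _

lemma contract₁₂_t12_mul_t13 (f g : Module.Dual k A) (r s : A ⊗[k] A) :
    contract₁₂ f g (t12 k A r * t13 k A s) = rsharp k A s (Lstar k A (rtsharp k A r g) f) := by
  induction r using TensorProduct.induction_on with
  | zero => simp
  | tmul a b =>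
      induction s using TensorProduct.induction_on with
      | zero => simp
      | tmul c d =>
          simp [Algebra.TensorProduct.tmul_mul_tmul]
          ring_nf
      | add u v hu hv => simp_all [mul_add]
  | add u v hu hv => simp_all [add_mul]

lemma contract₁₂_t13_mul_t23 (f g : Module.Dual k A) (r s : A ⊗[k] A) :
    contract₁₂ f g (t13 k A r * t23 k A s) = rsharp k A r f * rsharp k A s g := by
  induction r using TensorProduct.induction_on with
  | zero => simp
  | tmul a b =>
      induction s using TensorProduct.induction_on with
      | zero => simp
      | tmul c d =>
          simp [t23, Algebra.TensorProduct.tmul_mul_tmul, smul_smul]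
          ring_nf
      | add u v hu hv => simp_all [mul_add]
  | add u v hu hv => simp_all [add_mul]

lemma contract₁₂_t23_mul_t12 (f g : Module.Dual k A) (r s : A ⊗[k] A) :
    contract₁₂ f g (t23 k A r * t12 k A s) = rsharp k A r (Rstar k A (rsharp k A s f) g) := by
  induction r using TensorProduct.induction_on with
  | zero => simp
  | tmul a b =>
      induction s using TensorProduct.induction_on with
      | zero => simp
      | tmul c d => simp [t23, Algebra.TensorProduct.tmul_mul_tmul]
      | add u v hu hv => simp_all [mul_add]
  | add u v hu hv => simp_all [add_mul]

lemma contract₁₂_t13 (f g : Module.Dual k A) (r : A ⊗[k] A) :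
    contract₁₂ f g (t13 k A r) = g 1 • rsharp k A r f := by
  induction r using TensorProduct.induction_on with
  | zero => simp
  | tmul a b => simp [smul_smul, mul_comm]
  | add u v hu hv => simp_all

lemma contract₁₂_nhacYBE_sub (μ : k) (r : A ⊗[k] A) (f g : Module.Dual k A) :
    contract₁₂ f g (t12 k A r * t13 k A r + t13 k A r * t23 k A r - t23 k A r * t12 k A r
        - μ • t13 k A r) =
      rsharp k A r f * rsharp k A r g
        + rsharp k A r (Lstar k A (rtsharp k A r g) f)
        - rsharp k A r (Rstar k A (rsharp k A r f) g)
        - (μ * g 1) • rsharp k A r f := by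
  simp only [map_sub, map_add, map_smul, contract₁₂_t12_mul_t13, contract₁₂_t13_mul_t23,
    contract₁₂_t23_mul_t12, contract₁₂_t13, mul_smul]
  abel

end NonhomogeneousAYBE

open NonhomogeneousAYBE in
theorem stmt3_general (k A : Type*) [Field k] [Ring A] [Algebra k A]
    (μ : k) (r : A ⊗[k] A) :
    nhacYBE k A μ r ↔
      ∀ f g : Module.Dual k A,
        rsharp k A r f * rsharp k A r g
          + rsharp k A r (Lstar k A (rtsharp k A r g) f)
          - rsharp k A r (Rstar k A (rsharp k A r f) g)
          - (μ * g 1) • rsharp k A r f = 0 := by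
  simp_rw [← contract₁₂_nhacYBE_sub]
  rw [nhacYBE, ← sub_eq_zero]
  exact ⟨fun h f g ↦ by rw [h, map_zero], eq_zero_of_forall_contract₁₂_eq_zero⟩

theorem stmt3 (k A : Type*) [Field k] [Ring A] [Algebra k A]
    [FiniteDimensional k A] (μ : k) (r : A ⊗[k] A) :
    nhacYBE k A μ r ↔
      ∀ f g : Module.Dual k A,
        rsharp k A r f * rsharp k A r g
          + rsharp k A r (Lstar k A (rtsharp k A r g) f)
          - rsharp k A r (Rstar k A (rsharp k A r f) g)
          - (μ * g 1) • rsharp k A r f = 0 :=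
  stmt3_general k A μ r
end

section
/- Let (A,·,1,B) be a unital symmetric Frobenius algebra with φ♯: A* → A the isomorphism given by ⟨(φ♯)⁻¹(x), y⟩ = B(x,y). For r ∈ A⊗A define P_r(x) := r♯((φ♯)⁻¹(x)) and P_r^t(x) := r^{t♯}((φ♯)⁻¹(x)). Then r is a solution of the μ-nonhomogeneous associative Yang-Baxter equation if and only if P_r(x)·P_r(y) = P_r(P_r(x)·y) − P_r(x·P_r^t(y)) + μ B(1,y) P_r(x) for all x,y ∈ A. -/
/-!
Pairing the defect `r₁₂r₁₃ + r₁₃r₂₃ − r₂₃r₁₂ − μ r₁₃` with `B x ⊗ B y ⊗ h` gives, term by term,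
`h (P x * P y − P (P x * y) + P (x * Pᵗ y) − μ B(1, y) P x)`: the only inputs are the invariance
and symmetry of `B`, which move the products of tensor legs into the arguments of `P` and `Pᵗ`.
Since `B : A → A*` is onto and the functionals `f ⊗ g ⊗ h` separate the points of `A ⊗ A ⊗ A`,
the defect vanishes exactly when the operator identity holds.
-/


open TensorProduct

namespace TensorProduct

open Module

variable {R M N P : Type*} [CommRing R] [AddCommGroup M] [AddCommGroup N] [AddCommGroup P]
  [Module R M] [Module R N] [Module R P]

noncomputable def dualDistrib₃ (f : Dual R M) (g : Dual R N) (h : Dual R P) :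
    Dual R (M ⊗[R] (N ⊗[R] P)) :=
  dualDistrib R M (N ⊗[R] P) (f ⊗ₜ dualDistrib R N P (g ⊗ₜ h))

@[simp]
theorem dualDistrib₃_tmul_tmul (f : Dual R M) (g : Dual R N) (h : Dual R P) (m : M) (n : N)
    (p : P) : dualDistrib₃ f g h (m ⊗ₜ (n ⊗ₜ p)) = f m * (g n * h p) :=
  rfl

theorem eq_zero_of_forall_dualDistrib_tmul_apply_eq_zero
    [Free R M] [Free R N] [Module.Finite R M] [Module.Finite R N] {T : M ⊗[R] N}
    (h : ∀ f g, dualDistrib R M N (f ⊗ₜ g) T = 0) : T = 0 := by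
  refine (forall_dual_apply_eq_zero_iff R T).mp fun φ => ?_
  obtain ⟨u, rfl⟩ := (dualDistribEquiv R M N).surjective φ
  induction u using TensorProduct.induction_on with
  | zero => simp
  | tmul f g => exact h f g
  | add u v hu hv => rw [map_add, LinearMap.add_apply, hu, hv, add_zero]

theorem eq_zero_of_forall_dualDistrib₃_apply_eq_zero
    [Free R M] [Free R N] [Free R P] [Module.Finite R M] [Module.Finite R N] [Module.Finite R P]
    {T : M ⊗[R] (N ⊗[R] P)} (h : ∀ f g h, dualDistrib₃ f g h T = 0) :
    T = 0 := by
  refine eq_zero_of_forall_dualDistrib_tmul_apply_eq_zero fun f ψ => ?_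
  obtain ⟨u, rfl⟩ := (dualDistribEquiv R N P).surjective ψ
  induction u using TensorProduct.induction_on with
  | zero => simp
  | tmul g h' => exact h f g h'
  | add u v hu hv => rw [map_add, tmul_add, map_add, LinearMap.add_apply, hu, hv, add_zero]

end TensorProduct

open Module

section

variable {k A : Type*} [Field k] [Ring A] [Algebra k A]

@[simp]
theorem rsharp_tmul (a b : A) (f : Dual k A) : rsharp k A (a ⊗ₜ b) f = f a • b := by
  simp [rsharp]

@[simp]
theorem rtsharp_tmul (a b : A) (f : Dual k A) : rtsharp k A (a ⊗ₜ b) f = f b • a := by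
  simp [rtsharp]

@[simp]
theorem rsharp_add (r s : A ⊗[k] A) (f : Dual k A) :
    rsharp k A (r + s) f = rsharp k A r f + rsharp k A s f := by
  simp [rsharp]

@[simp]
theorem rtsharp_add (r s : A ⊗[k] A) (f : Dual k A) :
    rtsharp k A (r + s) f = rtsharp k A r f + rtsharp k A s f := by
  simp [rtsharp]

@[simp]
theorem rsharp_zero (f : Dual k A) : rsharp k A 0 f = 0 := by
  simp [rsharp]

@[simp]
theorem rtsharp_zero (f : Dual k A) : rtsharp k A 0 f = 0 := by
  simp [rtsharp]

@[simp]
theorem rsharp_zero_right (r : A ⊗[k] A) : rsharp k A r 0 = 0 := by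
  simp [rsharp]

@[simp]
theorem rsharp_smul_right (r : A ⊗[k] A) (c : k) (f : Dual k A) :
    rsharp k A r (c • f) = c • rsharp k A r f := by
  simp [rsharp, LinearMap.rTensor_smul]

@[simp]
theorem rsharp_add_right (r : A ⊗[k] A) (f g : Dual k A) :
    rsharp k A r (f + g) = rsharp k A r f + rsharp k A r g := by
  simp [rsharp, LinearMap.rTensor_add]

@[simp]
theorem t12_tmul (a b : A) : t12 k A (a ⊗ₜ b) = a ⊗ₜ (b ⊗ₜ 1) := rfl

@[simp]
theorem t13_tmul (a b : A) : t13 k A (a ⊗ₜ b) = a ⊗ₜ (1 ⊗ₜ b) := rfl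

@[simp]
theorem t23_tmul (a b : A) : t23 k A (a ⊗ₜ b) = 1 ⊗ₜ (a ⊗ₜ b) := rfl

@[simp]
theorem t12_add (r s : A ⊗[k] A) : t12 k A (r + s) = t12 k A r + t12 k A s := map_add _ _ _

@[simp]
theorem t13_add (r s : A ⊗[k] A) : t13 k A (r + s) = t13 k A r + t13 k A s := map_add _ _ _

@[simp]
theorem t23_add (r s : A ⊗[k] A) : t23 k A (r + s) = t23 k A r + t23 k A s := tmul_add _ _ _

@[simp]
theorem t12_zero : t12 k A 0 = 0 := map_zero _

@[simp]
theorem t13_zero : t13 k A 0 = 0 := map_zero _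

@[simp]
theorem t23_zero : t23 k A 0 = 0 := tmul_zero _ _

variable (B : A →ₗ[k] A →ₗ[k] k)

theorem dualDistrib₃_t12_mul_t13 (hinvB : ∀ x y z : A, B (x * y) z = B x (y * z))
    (r s : A ⊗[k] A) (x : A) (g h : Dual k A) :
    dualDistrib₃ (B x) g h (t12 k A r * t13 k A s)
      = h (rsharp k A s (B (x * rtsharp k A r g))) := by
  induction r using TensorProduct.induction_on with
  | zero => simp
  | add r r' hr hr' =>
    simp only [t12_add, rtsharp_add, add_mul, mul_add, map_add, hr, hr', rsharp_add_right]
  | tmul a b =>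
    induction s using TensorProduct.induction_on with
    | zero => simp
    | add s s' hs hs' => simp only [t13_add, mul_add, map_add, hs, hs', rsharp_add]
    | tmul c d =>
      simp only [t12_tmul, t13_tmul, Algebra.TensorProduct.tmul_mul_tmul, mul_one, one_mul,
        dualDistrib₃_tmul_tmul, rtsharp_tmul, Algebra.mul_smul_comm, map_smul, rsharp_smul_right,
        rsharp_tmul, hinvB, smul_eq_mul]
      ring

theorem dualDistrib₃_t23_mul_t12 (hsymm : ∀ x y : A, B x y = B y x)
    (hinvB : ∀ x y z : A, B (x * y) z = B x (y * z))
    (r s : A ⊗[k] A) (f : Dual k A) (y : A) (h : Dual k A) :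
    dualDistrib₃ f (B y) h (t23 k A r * t12 k A s)
      = h (rsharp k A r (B (rsharp k A s f * y))) := by
  induction r using TensorProduct.induction_on with
  | zero => simp
  | add r r' hr hr' => simp only [t23_add, add_mul, map_add, hr, hr', rsharp_add]
  | tmul a b =>
    induction s using TensorProduct.induction_on with
    | zero => simp
    | add s s' hs hs' =>
      simp only [t12_add, mul_add, map_add, hs, hs', rsharp_add, add_mul, rsharp_add_right]
    | tmul c d =>
      have hmove : B (d * y) a = B y (a * d) := by rw [hinvB, hsymm, hinvB]
      simp [hmove]

theorem dualDistrib₃_t13_mul_t23 (r s : A ⊗[k] A) (f g h : Dual k A) :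
    dualDistrib₃ f g h (t13 k A r * t23 k A s) = h (rsharp k A r f * rsharp k A s g) := by
  induction r using TensorProduct.induction_on with
  | zero => simp
  | add r r' hr hr' => simp only [t13_add, add_mul, map_add, hr, hr', rsharp_add]
  | tmul a b =>
    induction s using TensorProduct.induction_on with
    | zero => simp
    | add s s' hs hs' => simp only [t23_add, mul_add, map_add, hs, hs', rsharp_add]
    | tmul c d =>
      simp only [t13_tmul, t23_tmul, Algebra.TensorProduct.tmul_mul_tmul, mul_one, one_mul,
        dualDistrib₃_tmul_tmul, rsharp_tmul, Algebra.mul_smul_comm, Algebra.smul_mul_assoc,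
        map_smul, smul_eq_mul]
      ring

theorem dualDistrib₃_t13 (r : A ⊗[k] A) (f g h : Dual k A) :
    dualDistrib₃ f g h (t13 k A r) = g 1 * h (rsharp k A r f) := by
  induction r using TensorProduct.induction_on with
  | zero => simp
  | add r r' hr hr' => simp only [t13_add, map_add, hr, hr', rsharp_add, mul_add]
  | tmul a b =>
    simp only [t13_tmul, dualDistrib₃_tmul_tmul, rsharp_tmul, map_smul, smul_eq_mul]
    ring

theorem dualDistrib₃_nhacYBE_defect (hsymm : ∀ x y : A, B x y = B y x)
    (hinvB : ∀ x y z : A, B (x * y) z = B x (y * z)) (μ : k) (r : A ⊗[k] A) (x y : A)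
    (h : Dual k A) :
    dualDistrib₃ (B x) (B y) h
        (t12 k A r * t13 k A r + t13 k A r * t23 k A r - t23 k A r * t12 k A r
          - μ • t13 k A r)
      = h (rsharp k A r (B x) * rsharp k A r (B y)
          - (rsharp k A r (B (rsharp k A r (B x) * y))
            - rsharp k A r (B (x * rtsharp k A r (B y)))
            + (μ * B 1 y) • rsharp k A r (B x))) := by
  simp only [map_sub, map_add, map_smul, dualDistrib₃_t12_mul_t13 B hinvB,
    dualDistrib₃_t13_mul_t23, dualDistrib₃_t23_mul_t12 B hsymm hinvB, dualDistrib₃_t13,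
    hsymm y 1, smul_eq_mul]
  ring

end

theorem stmt7 (k A : Type*) [Field k] [Ring A] [Algebra k A]
    [FiniteDimensional k A]
    (B : A →ₗ[k] A →ₗ[k] k)
    (hsymm : ∀ x y : A, B x y = B y x)
    (hinvB : ∀ x y z : A, B (x * y) z = B x (y * z))
    (hnd : ∀ x : A, (∀ y : A, B x y = 0) → x = 0)
    (μ : k) (r : A ⊗[k] A) :
    nhacYBE k A μ r ↔
      (let Pr : A → A := fun x => rsharp k A r (B x)
       let Prt : A → A := fun x => rtsharp k A r (B x)
       ∀ x y : A,
         Pr x * Pr y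
           = Pr (Pr x * y) - Pr (x * Prt y) + (μ * B 1 y) • Pr x) := by
  have hB : B.Nondegenerate := ⟨hnd, fun y hy => hnd y fun x => hsymm y x ▸ hy x⟩
  rw [nhacYBE, ← sub_eq_zero]
  dsimp only
  constructor
  · intro hYBE x y
    refine sub_eq_zero.mp (hB.2 _ fun z => ?_)
    rw [← dualDistrib₃_nhacYBE_defect B hsymm hinvB, hYBE, map_zero]
  · intro hP
    refine eq_zero_of_forall_dualDistrib₃_apply_eq_zero fun f g h => ?_
    obtain ⟨x, rfl⟩ : ∃ x, B x = f := (LinearMap.BilinForm.toDual B hB).surjective f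
    obtain ⟨y, rfl⟩ : ∃ y, B y = g := (LinearMap.BilinForm.toDual B hB).surjective g
    rw [dualDistrib₃_nhacYBE_defect B hsymm hinvB, sub_eq_zero.mpr (hP x y), map_zero]
end

section
/- Let (A,·,1) be a unital associative algebra and s ∈ A⊗A symmetric and invariant. Define a* ∘ b* := a* L*(s♯(b*)) on A*. Then (A*, ∘) is an associative algebra and (A*, ∘, R*, L*) is an A-bimodule k-algebra: R*(x)(a*∘b*) = (R*(x)a*)∘b*, (a*∘b*)L*(x) = a*∘(b*L*(x)), and (a*L*(x))∘b* = a*∘(R*(x)b*) for all x ∈ A, a*,b* ∈ A*. -/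
/-!
Invariance and symmetry of `s` make `s♯` intertwine the dual actions with multiplication:
`s♯(R*(x) a*) = x s♯(a*)` and `s♯(a* L*(x)) = s♯(a*) x`. Since `a* ∘ b* = a* L*(s♯ b*)` and
`L*(xy) = L*(y) L*(x)`, each identity then reduces to associativity in `A`.
-/

open TensorProduct

section

variable {k A : Type*} [Field k] [Ring A] [Algebra k A]

theorem Lstar_mul (x y : A) (f : Module.Dual k A) :
    Lstar k A (x * y) f = Lstar k A y (Lstar k A x f) :=
  LinearMap.ext fun b => congrArg f (mul_assoc x y b)

theorem Rstar_Lstar_comm (x y : A) (f : Module.Dual k A) :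
    Rstar k A x (Lstar k A y f) = Lstar k A y (Rstar k A x f) :=
  LinearMap.ext fun b => congrArg f (mul_assoc y b x).symm

theorem rsharp_lTensor (g : A →ₗ[k] A) (s : A ⊗[k] A) (f : Module.Dual k A) :
    rsharp k A (LinearMap.lTensor A g s) f = g (rsharp k A s f) := by
  induction s using TensorProduct.induction_on with
  | zero => simp [rsharp]
  | tmul a b => simp [rsharp]
  | add s t hs ht => simp_all [rsharp]

theorem rsharp_rTensor (g : A →ₗ[k] A) (s : A ⊗[k] A) (f : Module.Dual k A) :
    rsharp k A (LinearMap.rTensor A g s) f = rsharp k A s (g.dualMap f) := by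
  rw [rsharp, rsharp, ← LinearMap.rTensor_comp_apply]
  rfl

namespace tinv

variable {s : A ⊗[k] A}

theorem lTensor_mulLeft_eq (hinv : tinv k A s) (x : A) :
    LinearMap.lTensor A (LinearMap.mulLeft k x) s
      = LinearMap.rTensor A (LinearMap.mulRight k x) s :=
  sub_eq_zero.mp (hinv x)

theorem rTensor_mulLeft_eq (hinv : tinv k A s) (hsym : TensorProduct.comm k A A s = s)
    (x : A) :
    LinearMap.rTensor A (LinearMap.mulLeft k x) s
      = LinearMap.lTensor A (LinearMap.mulRight k x) s := by
  rw [← hsym, LinearMap.rTensor_comm, LinearMap.lTensor_comm, hinv.lTensor_mulLeft_eq]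

theorem rsharp_Rstar (hinv : tinv k A s) (x : A) (f : Module.Dual k A) :
    rsharp k A s (Rstar k A x f) = x * rsharp k A s f := by
  rw [Rstar, ← rsharp_rTensor, ← hinv.lTensor_mulLeft_eq, rsharp_lTensor,
    LinearMap.mulLeft_apply]

theorem rsharp_Lstar (hinv : tinv k A s) (hsym : TensorProduct.comm k A A s = s)
    (x : A) (f : Module.Dual k A) :
    rsharp k A s (Lstar k A x f) = rsharp k A s f * x := by
  rw [Lstar, ← rsharp_rTensor, hinv.rTensor_mulLeft_eq hsym, rsharp_lTensor,
    LinearMap.mulRight_apply]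

end tinv

end

theorem stmt9_general (k A : Type*) [Field k] [Ring A] [Algebra k A]
    (s : A ⊗[k] A)
    (hsym : TensorProduct.comm k A A s = s)
    (hinv : tinv k A s) :
    let circ : Module.Dual k A → Module.Dual k A → Module.Dual k A :=
      fun f g => Lstar k A (rsharp k A s g) f
    (∀ f g h : Module.Dual k A, circ (circ f g) h = circ f (circ g h)) ∧
    (∀ (x : A) (f g : Module.Dual k A),
      Rstar k A x (circ f g) = circ (Rstar k A x f) g) ∧
    (∀ (x : A) (f g : Module.Dual k A),
      Lstar k A x (circ f g) = circ f (Lstar k A x g)) ∧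
    (∀ (x : A) (f g : Module.Dual k A),
      circ (Lstar k A x f) g = circ f (Rstar k A x g)) := by
  intro circ
  refine ⟨fun f g h => ?_, fun x f g => Rstar_Lstar_comm x _ f, fun x f g => ?_,
    fun x f g => ?_⟩
  · change Lstar k A _ (Lstar k A _ f) = Lstar k A (rsharp k A s (Lstar k A _ g)) f
    rw [hinv.rsharp_Lstar hsym, Lstar_mul]
  · change Lstar k A x (Lstar k A _ f) = Lstar k A (rsharp k A s (Lstar k A x g)) f
    rw [hinv.rsharp_Lstar hsym, Lstar_mul]
  · change Lstar k A _ (Lstar k A x f) = Lstar k A (rsharp k A s (Rstar k A x g)) f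
    rw [hinv.rsharp_Rstar, Lstar_mul]

theorem stmt9 (k A : Type*) [Field k] [Ring A] [Algebra k A]
    [FiniteDimensional k A]
    (s : A ⊗[k] A)
    (hsym : TensorProduct.comm k A A s = s)
    (hinv : tinv k A s) :
    let circ : Module.Dual k A → Module.Dual k A → Module.Dual k A :=
      fun f g => Lstar k A (rsharp k A s g) f
    (∀ f g h : Module.Dual k A, circ (circ f g) h = circ f (circ g h)) ∧
    (∀ (x : A) (f g : Module.Dual k A),
      Rstar k A x (circ f g) = circ (Rstar k A x f) g) ∧
    (∀ (x : A) (f g : Module.Dual k A),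
      Lstar k A x (circ f g) = circ f (Lstar k A x g)) ∧
    (∀ (x : A) (f g : Module.Dual k A),
      circ (Lstar k A x f) g = circ f (Rstar k A x g)) :=
  stmt9_general k A s hsym hinv
end

section
/- Let (A,1) be a unital associative algebra and r ∈ A⊗A with r + σ(r) = μ(1⊗1) for some μ ≠ 0. Then r satisfies r₁₂r₁₃ + r₁₃r₂₃ − r₂₃r₁₂ = μ r₁₃ if and only if the pair (r, −σ(r)) is an associative Yang-Baxter pair, i.e. setting s := −σ(r): r₁₂r₁₃ − r₂₃r₁₂ + r₁₃s₂₃ = 0 and r₁₂s₁₃ − s₂₃s₁₂ + s₁₃s₂₃ = 0. -/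
open TensorProduct

/-!
The hypothesis says `-σ(r) = r - μ (1 ⊗ 1)`, so each leg of `s` is the corresponding leg of `r`
shifted by `-μ`. After this substitution both equations of the pair expand to
`r₁₂r₁₃ + r₁₃r₂₃ - r₂₃r₁₂ - μ r₁₃ = 0`, which is the nonhomogeneous equation.
-/

section ShiftedPair

variable {k R : Type*} [CommRing k] [Ring R] [Algebra k R]

theorem mul_add_mul_sub_mul_eq_smul_iff (a b c : R) (μ : k) :
    a * b + b * c - c * a = μ • b ↔
      a * b - c * a + b * (c - μ • 1) = 0 ∧
        a * (b - μ • 1) - (c - μ • 1) * (a - μ • 1) + (b - μ • 1) * (c - μ • 1) = 0 := by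
  have first : a * b - c * a + b * (c - μ • 1) = a * b + b * c - c * a - μ • b := by
    rw [mul_sub, mul_smul_comm, mul_one]
    abel
  have second : a * (b - μ • 1) - (c - μ • 1) * (a - μ • 1) + (b - μ • 1) * (c - μ • 1)
      = a * b + b * c - c * a - μ • b := by
    simp only [mul_sub, sub_mul, mul_smul_comm, smul_mul_assoc, mul_one, one_mul, smul_sub]
    abel
  rw [first, second, sub_eq_zero, and_self]

end ShiftedPair

section Legs

variable {k A : Type*} [Field k] [Ring A] [Algebra k A]

theorem t12_sub_smul_one (μ : k) (r : A ⊗[k] A) :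
    t12 k A (r - μ • (1 : A) ⊗ₜ[k] (1 : A)) = t12 k A r - μ • 1 := by
  simp [t12, Algebra.TensorProduct.one_def]

theorem t13_sub_smul_one (μ : k) (r : A ⊗[k] A) :
    t13 k A (r - μ • (1 : A) ⊗ₜ[k] (1 : A)) = t13 k A r - μ • 1 := by
  simp [t13, Algebra.TensorProduct.one_def]

theorem t23_sub_smul_one (μ : k) (r : A ⊗[k] A) :
    t23 k A (r - μ • (1 : A) ⊗ₜ[k] (1 : A)) = t23 k A r - μ • 1 := by
  simp [t23, tmul_sub, Algebra.TensorProduct.one_def]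

end Legs

theorem stmt13_general (k A : Type*) [Field k] [Ring A] [Algebra k A]
    (μ : k) (r : A ⊗[k] A)
    (h : r + TensorProduct.comm k A A r = μ • ((1 : A) ⊗ₜ[k] (1 : A))) :
    nhacYBE k A μ r ↔
      (let s := -(TensorProduct.comm k A A r)
       t12 k A r * t13 k A r - t23 k A r * t12 k A r + t13 k A r * t23 k A s = 0 ∧
       t12 k A r * t13 k A s - t23 k A s * t12 k A s + t13 k A s * t23 k A s = 0) := by
  have hs : -(TensorProduct.comm k A A r) = r - μ • ((1 : A) ⊗ₜ[k] (1 : A)) := by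
    rw [← h]
    abel
  simp only [hs, t12_sub_smul_one, t13_sub_smul_one, t23_sub_smul_one]
  exact mul_add_mul_sub_mul_eq_smul_iff _ _ _ μ

theorem stmt13 (k A : Type*) [Field k] [Ring A] [Algebra k A]
    (μ : k) (hμ : μ ≠ 0) (r : A ⊗[k] A)
    (h : r + TensorProduct.comm k A A r = μ • ((1 : A) ⊗ₜ[k] (1 : A))) :
    nhacYBE k A μ r ↔
      (let s := -(TensorProduct.comm k A A r)
       t12 k A r * t13 k A r - t23 k A r * t12 k A r + t13 k A r * t23 k A s = 0 ∧
       t12 k A r * t13 k A s - t23 k A s * t12 k A s + t13 k A s * t23 k A s = 0) :=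
  stmt13_general k A μ r h
end

section
/- Let A be an associative k-algebra, (V,ℓ,r) an A-bimodule, and α: V → A linear. Then α is an O-operator of weight zero (α(u)α(v) = α(ℓ(α(u))v) + α(u r(α(v))) for all u,v ∈ V) if and only if the map α̂: A⊕V → A⊕V, α̂(x,u) := (α(u), −λu), is a Rota-Baxter operator of weight λ on the semi-direct product algebra A ⋉_{ℓ,r} V. -/
/-- The semi-direct product multiplication on `A ⊕ V`:
`(a+u)·(b+v) = ab + ℓ(a)v + u r(b)`. -/
def sdMul (k A V : Type*) [Field k] [NonUnitalRing A] [Module k A]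
    [AddCommGroup V] [Module k V]
    (ℓ r : A →ₗ[k] Module.End k V) : A × V → A × V → A × V :=
  fun p q => (p.1 * q.1, ℓ p.1 q.2 + r q.1 p.2)

/-!
Write `α̂(x, u) = (α u, -λ u)`. Expanding the Rota–Baxter identity for `α̂` on
`(a, u)` and `(b, v)`, every term involving `a` or `b` occurs twice with opposite signs
(once with a factor `λ` from `α̂` and once from the weight `λ`), and the `V`-components
agree identically. What is left is the `A`-component
`α u * α v = α (ℓ (α u) v) + α (r (α v) u)`, the O-operator identity on `u, v`.
-/

section

variable {k B : Type*} [Field k] [AddCommGroup B] [Module k B]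

def IsRotaBaxterOf (mul : B → B → B) (P : B → B) (lam : k) : Prop :=
  ∀ x y, mul (P x) (P y) = P (mul (P x) y) + P (mul x (P y)) + lam • P (mul x y)

end

section

variable {k A V : Type*} [Field k] [NonUnitalRing A] [Module k A]
  [AddCommGroup V] [Module k V]

def IsOOperatorOf (ℓ r : A →ₗ[k] Module.End k V) (α : V →ₗ[k] A) : Prop :=
  ∀ u v : V, α u * α v = α (ℓ (α u) v) + α (r (α v) u)

def sdLift (α : V →ₗ[k] A) (lam : k) : A × V → A × V :=
  fun p => (α p.2, (-lam) • p.2)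

theorem sdMul_sdLift_identity_iff (ℓ r : A →ₗ[k] Module.End k V) (α : V →ₗ[k] A)
    (lam : k) (p q : A × V) :
    sdMul k A V ℓ r (sdLift α lam p) (sdLift α lam q)
        = sdLift α lam (sdMul k A V ℓ r (sdLift α lam p) q)
          + sdLift α lam (sdMul k A V ℓ r p (sdLift α lam q))
          + lam • sdLift α lam (sdMul k A V ℓ r p q) ↔
      α p.2 * α q.2 = α (ℓ (α p.2) q.2) + α (r (α q.2) p.2) := by
  obtain ⟨a, u⟩ := p
  obtain ⟨b, v⟩ := q
  rw [Prod.ext_iff]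
  simp only [sdMul, sdLift, Prod.fst_add, Prod.snd_add, Prod.smul_fst, Prod.smul_snd,
    map_add, map_smul]
  have hsnd : (-lam) • ℓ (α u) v + (-lam) • r (α v) u
      = (-lam) • (ℓ (α u) v + (-lam) • r b u)
        + (-lam) • ((-lam) • ℓ a v + r (α v) u)
        + lam • ((-lam) • (ℓ a v + r b u)) := by
    module
  have hfst : α (ℓ (α u) v) + (-lam) • α (r b u) + ((-lam) • α (ℓ a v) + α (r (α v) u))
        + lam • (α (ℓ a v) + α (r b u))
      = α (ℓ (α u) v) + α (r (α v) u) := by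
    module
  rw [hfst]
  exact and_iff_left hsnd

theorem isOOperatorOf_iff_isRotaBaxterOf_sdLift (ℓ r : A →ₗ[k] Module.End k V)
    (α : V →ₗ[k] A) (lam : k) :
    IsOOperatorOf ℓ r α ↔ IsRotaBaxterOf (sdMul k A V ℓ r) (sdLift α lam) lam := by
  simp only [IsRotaBaxterOf, sdMul_sdLift_identity_iff]
  exact ⟨fun h p q => h p.2 q.2, fun h u v => h (0, u) (0, v)⟩

end

theorem stmt14_general (k A V : Type*) [Field k] [NonUnitalRing A] [Module k A]
    [AddCommGroup V] [Module k V]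
    (ℓ r : A →ₗ[k] Module.End k V)
    (lam : k) (α : V →ₗ[k] A) :
    (∀ u v : V, α u * α v = α (ℓ (α u) v) + α (r (α v) u)) ↔
      (let αhat : A × V → A × V := fun p => (α p.2, (-lam) • p.2)
       ∀ p q : A × V,
         sdMul k A V ℓ r (αhat p) (αhat q)
           = αhat (sdMul k A V ℓ r (αhat p) q)
             + αhat (sdMul k A V ℓ r p (αhat q))
             + lam • αhat (sdMul k A V ℓ r p q)) :=
  isOOperatorOf_iff_isRotaBaxterOf_sdLift ℓ r α lam

theorem stmt14 (k A V : Type*) [Field k] [NonUnitalRing A] [Module k A]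
    [AddCommGroup V] [Module k V]
    (ℓ r : A →ₗ[k] Module.End k V)
    (hl : ∀ (x y : A) (v : V), ℓ (x * y) v = ℓ x (ℓ y v))
    (hr : ∀ (x y : A) (v : V), r (x * y) v = r y (r x v))
    (hlr : ∀ (x y : A) (v : V), r y (ℓ x v) = ℓ x (r y v))
    (lam : k) (α : V →ₗ[k] A) :
    (∀ u v : V, α u * α v = α (ℓ (α u) v) + α (r (α v) u)) ↔
      (let αhat : A × V → A × V := fun p => (α p.2, (-lam) • p.2)
       ∀ p q : A × V,
         sdMul k A V ℓ r (αhat p) (αhat q)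
           = αhat (sdMul k A V ℓ r (αhat p) q)
             + αhat (sdMul k A V ℓ r p (αhat q))
             + lam • αhat (sdMul k A V ℓ r p q)) :=
  stmt14_general k A V ℓ r lam α
end

section
/- Let (A,·,1,ε) be an augmented unital associative k-algebra (ε: A → k an algebra homomorphism). Let r = Σᵢ aᵢ⊗bᵢ ∈ A⊗A be a solution of r₁₂r₁₃ + r₁₃r₂₃ − r₂₃r₁₂ = μ r₁₃ whose extended symmetrizer satisfies r + σ(r) − μ(1⊗1) = 0. Then the linear map P: A → A defined by P(x) := Σᵢ ε(aᵢ·x) bᵢ is a Rota-Baxter operator of weight zero: P(x)P(y) = P(P(x)y) + P(xP(y)) for all x,y ∈ A. -/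
/-!
Write `c := (ε ⊗ id) r`. Since `ε` is multiplicative, `P x = ε(x) c`, and a rank-one map `x ↦ ε(x) c`
is a Rota-Baxter operator of weight zero as soon as `c² = 2 ε(c) c`.
Applying the algebra map `ε ⊗ ε ⊗ id` to the Yang-Baxter equation gives `ε(c) c + c² − c ε(c) = μ c`,
i.e. `c² = μ c`, and applying `ε ⊗ ε` to the symmetrizer condition gives `2 ε(c) = μ`.
-/

open TensorProduct

namespace AlgHom

section CommSemiring

variable {k A : Type*} [CommSemiring k] [Semiring A] [Algebra k A] (ε : A →ₐ[k] k)

theorem smul_mul_smul_eq_rotaBaxter (c : A) (hc : c * c = (ε c + ε c) • c) (x y : A) :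
    (ε x • c) * (ε y • c) = ε ((ε x • c) * y) • c + ε (x * (ε y • c)) • c := by
  simp only [hc, smul_mul_assoc, mul_smul_comm, map_smul, map_mul,
    smul_eq_mul, smul_smul, ← add_smul]
  congr 1
  ring

noncomputable def contractLeft : A ⊗[k] A →ₗ[k] A :=
  (TensorProduct.lid k A).toLinearMap ∘ₗ LinearMap.rTensor A ε.toLinearMap

@[simp]
theorem contractLeft_tmul (a b : A) : ε.contractLeft (a ⊗ₜ b) = ε a • b := by
  simp [contractLeft]

noncomputable def contractLeftTwo : A ⊗[k] (A ⊗[k] A) →ₐ[k] A :=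
  (Algebra.TensorProduct.lid k A).toAlgHom.comp <| Algebra.TensorProduct.map ε <|
    (Algebra.TensorProduct.lid k A).toAlgHom.comp (Algebra.TensorProduct.map ε (AlgHom.id k A))

@[simp]
theorem contractLeftTwo_tmul (a b c : A) :
    ε.contractLeftTwo (a ⊗ₜ (b ⊗ₜ c)) = (ε a * ε b) • c := by
  simp [contractLeftTwo, mul_smul, smul_comm (ε b)]

theorem lid_rTensor_mulRight (r : A ⊗[k] A) (x : A) :
    TensorProduct.lid k A (LinearMap.rTensor A (ε.toLinearMap ∘ₗ LinearMap.mulRight k x) r)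
      = ε x • ε.contractLeft r := by
  induction r using TensorProduct.induction_on with
  | zero => simp
  | tmul a b => simp [mul_smul, smul_comm (ε a) (ε x)]
  | add u v hu hv => simp only [map_add, smul_add, hu, hv]

theorem apply_contractLeft_comm (r : A ⊗[k] A) :
    ε (ε.contractLeft (TensorProduct.comm k A A r)) = ε (ε.contractLeft r) := by
  induction r using TensorProduct.induction_on with
  | zero => simp
  | tmul a b => simp [mul_comm]
  | add u v hu hv => simp only [map_add, hu, hv]

end CommSemiring

section Field

variable {k A : Type*} [Field k] [Ring A] [Algebra k A] (ε : A →ₐ[k] k) (r : A ⊗[k] A)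

theorem contractLeftTwo_t12 :
    ε.contractLeftTwo (t12 k A r) = algebraMap k A (ε (ε.contractLeft r)) := by
  induction r using TensorProduct.induction_on with
  | zero => simp [t12]
  | tmul a b => simp [t12, Algebra.algebraMap_eq_smul_one]
  | add u v hu hv => simp only [t12, map_add] at hu hv ⊢; rw [hu, hv]

theorem contractLeftTwo_t13 : ε.contractLeftTwo (t13 k A r) = ε.contractLeft r := by
  induction r using TensorProduct.induction_on with
  | zero => simp [t13]
  | tmul a b => simp [t13]
  | add u v hu hv => simp only [t13, map_add] at hu hv ⊢; rw [hu, hv]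

theorem contractLeftTwo_t23 : ε.contractLeftTwo (t23 k A r) = ε.contractLeft r := by
  induction r using TensorProduct.induction_on with
  | zero => simp [t23]
  | tmul a b => simp [t23]
  | add u v hu hv => simp only [t23, tmul_add, map_add] at hu hv ⊢; rw [hu, hv]

theorem contractLeft_mul_self_of_nhacYBE {μ : k} (hr : nhacYBE k A μ r) :
    ε.contractLeft r * ε.contractLeft r = μ • ε.contractLeft r := by
  have h := congrArg ε.contractLeftTwo hr
  rwa [map_smul, map_sub, map_add, map_mul, map_mul, map_mul, contractLeftTwo_t12,
    contractLeftTwo_t13, contractLeftTwo_t23, Algebra.commutes, add_sub_cancel_left] at h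

theorem apply_contractLeft_add_self {μ : k}
    (hsr : r + TensorProduct.comm k A A r - μ • ((1 : A) ⊗ₜ[k] (1 : A)) = 0) :
    ε (ε.contractLeft r) + ε (ε.contractLeft r) = μ := by
  have h := congrArg (fun s => ε (ε.contractLeft s)) hsr
  simpa [apply_contractLeft_comm, sub_eq_zero] using h

end Field

end AlgHom

theorem stmt16_general (k A : Type*) [Field k] [Ring A] [Algebra k A]
    (ε : A →ₐ[k] k) (μ : k) (r : A ⊗[k] A)
    (hr : nhacYBE k A μ r)
    (hsr : r + TensorProduct.comm k A A r - μ • ((1 : A) ⊗ₜ[k] (1 : A)) = 0) :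
    let P : A → A := fun x => TensorProduct.lid k A
      (LinearMap.rTensor A (ε.toLinearMap ∘ₗ LinearMap.mulRight k x) r)
    ∀ x y : A, P x * P y = P (P x * y) + P (x * P y) := by
  intro P x y
  have hP : ∀ z, P z = ε z • ε.contractLeft r := ε.lid_rTensor_mulRight r
  simp only [hP]
  refine ε.smul_mul_smul_eq_rotaBaxter _ ?_ x y
  rw [ε.contractLeft_mul_self_of_nhacYBE r hr, ε.apply_contractLeft_add_self r hsr]

theorem stmt16 (k A : Type*) [Field k] [Ring A] [Algebra k A]
    [FiniteDimensional k A]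
    (ε : A →ₐ[k] k) (μ : k) (r : A ⊗[k] A)
    (hr : nhacYBE k A μ r)
    (hsr : r + TensorProduct.comm k A A r - μ • ((1 : A) ⊗ₜ[k] (1 : A)) = 0) :
    let P : A → A := fun x => TensorProduct.lid k A
      (LinearMap.rTensor A (ε.toLinearMap ∘ₗ LinearMap.mulRight k x) r)
    ∀ x y : A, P x * P y = P (P x * y) + P (x * P y) :=
  stmt16_general k A ε μ r hr hsr
end

section
/- Let (A,·,1,ε) be an augmented unital associative algebra and r = Σᵢ aᵢ⊗bᵢ ∈ A⊗A a solution of r₁₂r₁₃ + r₁₃r₂₃ − r₂₃r₁₂ = μ r₁₃ whose extended symmetrizer 𝐫 := r + σ(r) − μ(1⊗1) is nonzero and satisfies (ε⊗id)(𝐫·(x⊗1)) = x for all x ∈ A (after identifying k⊗A ≅ A). Then P(x) := Σᵢ ε(aᵢ·x) bᵢ is a Rota-Baxter operator of weight −1: P(x)P(y) = P(P(x)y) + P(xP(y)) − P(xy). -/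
open TensorProduct

/-!
Because ε is multiplicative, `P x = ε x • e` with `e = (ε ⊗ id) r`. Applying the algebra map
`ε ⊗ ε ⊗ id` to the Yang–Baxter equation kills its first and third terms against each other and
leaves `e * e = μ • e`; applying `ε` to the normalisation of the symmetrizer at `x = 1` gives
`2 ε(e) - μ = 1`. These two facts are exactly what the Rota–Baxter identity of weight `-1` for
`x ↦ ε x • e` reduces to.
-/

def IsRotaBaxter {R A : Type*} [CommRing R] [Ring A] [Algebra R A] (w : R) (P : A → A) : Prop :=
  ∀ x y, P x * P y = P (P x * y) + P (x * P y) + w • P (x * y)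

namespace AlgHom

variable {R A B : Type*} [CommSemiring R] [Semiring A] [Algebra R A] [Semiring B] [Algebra R B]
  (ε : A →ₐ[R] R)

noncomputable def rTensorLid : A ⊗[R] B →ₐ[R] B :=
  (Algebra.TensorProduct.lid R B).toAlgHom.comp (Algebra.TensorProduct.map ε (AlgHom.id R B))

@[simp]
theorem rTensorLid_tmul (a : A) (b : B) : ε.rTensorLid (a ⊗ₜ[R] b) = ε a • b := rfl

theorem lid_rTensor_eq_rTensorLid (s : A ⊗[R] B) :
    TensorProduct.lid R B (LinearMap.rTensor B ε.toLinearMap s) = ε.rTensorLid s := rfl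

theorem lid_rTensor_comp_mulRight (x : A) (s : A ⊗[R] B) :
    TensorProduct.lid R B (LinearMap.rTensor B (ε.toLinearMap ∘ₗ LinearMap.mulRight R x) s) =
      ε x • ε.rTensorLid s := by
  have : ε.toLinearMap ∘ₗ LinearMap.mulRight R x = ε x • ε.toLinearMap := by
    ext a; simp [mul_comm]
  rw [this, LinearMap.rTensor_smul, LinearMap.smul_apply, map_smul, lid_rTensor_eq_rTensorLid]

theorem apply_rTensorLid_comm (s : A ⊗[R] A) :
    ε (ε.rTensorLid (TensorProduct.comm R A A s)) = ε (ε.rTensorLid s) := by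
  induction s using TensorProduct.induction_on with
  | zero => simp
  | tmul a b => simp [mul_comm]
  | add s t hs ht => simp only [map_add, hs, ht]

end AlgHom

section YangBaxter

variable {k A : Type*} [Field k] [Ring A] [Algebra k A] (ε : A →ₐ[k] k)

theorem rTensorLid_rTensorLid_t12 (r : A ⊗[k] A) :
    ε.rTensorLid (ε.rTensorLid (t12 k A r)) = algebraMap k A (ε (ε.rTensorLid r)) := by
  induction r using TensorProduct.induction_on with
  | zero => simp [t12]
  | tmul a b => simp [t12, Algebra.algebraMap_eq_smul_one, smul_smul]
  | add s t hs ht => simp only [t12, map_add] at *; rw [hs, ht]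

theorem rTensorLid_rTensorLid_t13 (r : A ⊗[k] A) :
    ε.rTensorLid (ε.rTensorLid (t13 k A r)) = ε.rTensorLid r := by
  induction r using TensorProduct.induction_on with
  | zero => simp [t13]
  | tmul a b => simp [t13]
  | add s t hs ht => simp only [t13, map_add] at *; rw [hs, ht]

theorem rTensorLid_rTensorLid_t23 (r : A ⊗[k] A) :
    ε.rTensorLid (ε.rTensorLid (t23 k A r)) = ε.rTensorLid r := by
  simp [t23]

theorem rTensorLid_mul_self_of_nhacYBE {μ : k} {r : A ⊗[k] A} (hr : nhacYBE k A μ r) :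
    ε.rTensorLid r * ε.rTensorLid r = μ • ε.rTensorLid r := by
  have h := congrArg (ε.rTensorLid.comp ε.rTensorLid) hr
  simp only [AlgHom.comp_apply, map_add, map_sub, map_mul, map_smul,
    rTensorLid_rTensorLid_t12, rTensorLid_rTensorLid_t13, rTensorLid_rTensorLid_t23, Algebra.commutes] at h
  rwa [add_sub_cancel_left] at h

end YangBaxter

theorem isRotaBaxter_smul_of_mul_self_eq {R A : Type*} [CommRing R] [Ring A] [Algebra R A]
    (ε : A →ₐ[R] R) {e : A} {μ : R} (he : e * e = μ • e) (hε : ε e + ε e - μ = 1) :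
    IsRotaBaxter (-1) (fun x => ε x • e) := by
  intro x y
  simp only [smul_mul_smul, he, map_mul, map_smul, smul_eq_mul, smul_smul, ← add_smul]
  rw [neg_one_smul, ← sub_eq_add_neg, ← sub_smul]
  congr 1
  linear_combination (-(ε x * ε y)) * hε

theorem stmt17_general (k A : Type*) [Field k] [Ring A] [Algebra k A]
    (ε : A →ₐ[k] k) (μ : k) (r : A ⊗[k] A)
    (hr : nhacYBE k A μ r)
    (hs : ∀ x : A,
      TensorProduct.lid k A (LinearMap.rTensor A ε.toLinearMap
        ((r + TensorProduct.comm k A A r - μ • ((1 : A) ⊗ₜ[k] (1 : A)))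
          * (x ⊗ₜ[k] (1 : A)))) = x) :
    let P : A → A := fun x => TensorProduct.lid k A
      (LinearMap.rTensor A (ε.toLinearMap ∘ₗ LinearMap.mulRight k x) r)
    ∀ x y : A, P x * P y = P (P x * y) + P (x * P y) - P (x * y) := by
  intro P x y
  have hP : P = fun x => ε x • ε.rTensorLid r :=
    funext fun x => ε.lid_rTensor_comp_mulRight x r
  have hε : ε (ε.rTensorLid r) + ε (ε.rTensorLid r) - μ = 1 := by
    have h := congrArg ε (hs 1)
    rw [← Algebra.TensorProduct.one_def, mul_one, ε.lid_rTensor_eq_rTensorLid] at h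
    simpa [ε.apply_rTensorLid_comm] using h
  have := isRotaBaxter_smul_of_mul_self_eq ε (rTensorLid_mul_self_of_nhacYBE ε hr) hε x y
  rw [hP]
  simpa [sub_eq_add_neg] using this

theorem stmt17 (k A : Type*) [Field k] [Ring A] [Algebra k A]
    [FiniteDimensional k A]
    (ε : A →ₐ[k] k) (μ : k) (r : A ⊗[k] A)
    (hr : nhacYBE k A μ r)
    (hne : r + TensorProduct.comm k A A r - μ • ((1 : A) ⊗ₜ[k] (1 : A)) ≠ 0)
    (hs : ∀ x : A,
      TensorProduct.lid k A (LinearMap.rTensor A ε.toLinearMap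
        ((r + TensorProduct.comm k A A r - μ • ((1 : A) ⊗ₜ[k] (1 : A)))
          * (x ⊗ₜ[k] (1 : A)))) = x) :
    let P : A → A := fun x => TensorProduct.lid k A
      (LinearMap.rTensor A (ε.toLinearMap ∘ₗ LinearMap.mulRight k x) r)
    ∀ x y : A, P x * P y = P (P x * y) + P (x * P y) - P (x * y) :=
  stmt17_general k A ε μ r hr hs
end
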